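/- arXiv:1606.06570 — 4 statements merged into one kernel-verified Lean document; each statement's English description precedes it below -/
import Mathlib

section
/- With masking registers, each additional round strictly increases computational power: for every r ∈ N, Fun_M^r ⊊ Fun_M^{r+1}. In particular, for r ≥ 2, the metastability-containing r-fold fan-out f : BM → Pow(BM^r) defined by f(x) = {x^r} for x ∈ {0,1} and f(M) = ⋃_{i ∈ [r]} ResM(0^i M 1^{r−i−1}) satisfies f ∈ Fun_M^r and f ∉ Fun_M^{r−1}. -/
set_option linter.unusedVariables false

attribute [local instance] Classical.propDecidable

/-- Signal values: stable `zero`, `one`, and metastable `meta`. -/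
inductive BM : Type
  | zero
  | one
  | metastable
  deriving DecidableEq

/-- Embedding of stable Boolean values into `BM`. -/
def BM.ofBool : Bool → BM
  | false => BM.zero
  | true => BM.one

/-- `inResM x y` means `y ∈ ResM(x)`, the set of partial resolutions of `x`. -/
def inResM {k : ℕ} (x y : Fin k → BM) : Prop :=
  ∀ i, x i = y i ∨ x i = BM.metastable

/-- `inRes x y` means `y ∈ Res(x)`, i.e. `y` is a complete (stable) resolution of `x`. -/
def inRes {k : ℕ} (x y : Fin k → BM) : Prop :=
  inResM x y ∧ ∀ i, y i ≠ BM.metastable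

/-- The complete resolutions of `x`, viewed as Boolean words. -/
def boolRes {k : ℕ} (x : Fin k → BM) : Set (Fin k → Bool) :=
  { z | ∀ i, x i = BM.ofBool (z i) ∨ x i = BM.metastable }

/-- The metastable (Kleene) extension `f_M : BM^k → BM` of a Boolean function
`f : B^k → B`: it outputs a stable value `b` iff all complete resolutions of the
input evaluate to `b` under `f`, and `meta` otherwise. -/
noncomputable def kleene {k : ℕ} (f : (Fin k → Bool) → Bool) (x : Fin k → BM) : BM :=
  if ∀ z ∈ boolRes x, f z = false then BM.zero
  else if ∀ z ∈ boolRes x, f z = true then BM.one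
  else BM.metastable

/-- Combinational logic with `m` input nodes: formulas built from inputs,
`BM`-constants (gates of indegree 0), and gates computing the metastable extension
of a Boolean function of their in-neighbors.  (A DAG evaluates exactly like the
formula obtained by unsharing, so this faithfully captures evaluation of
combinational logic DAGs.) -/
inductive Comb (m : ℕ) : Type
  | input : Fin m → Comb m
  | const : BM → Comb m
  | gate : (j : ℕ) → ((Fin j → Bool) → Bool) → (Fin j → Comb m) → Comb m

/-- Recursive evaluation of combinational logic on input `x ∈ BM^m`. -/
noncomputable def Comb.eval {m : ℕ} (x : Fin m → BM) : Comb m → BM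
  | .input i => x i
  | .const b => b
  | .gate _ f cs => kleene f (fun t => (cs t).eval x)

/-- Register types: simple, mask-0, mask-1. -/
inductive RegType : Type
  | simple
  | mask0
  | mask1
  deriving DecidableEq

/-- `regRead t b (o, b')` holds iff a register of type `t` in state `b` can be read
with read value `o`, moving to state `b'`:  a register in a stable state yields that
state and keeps it; a simple register in state `meta` yields `meta` and stays `meta`;
a mask-`c` register in state `meta` either yields `c` staying in state `meta`, or
yields `meta` changing its state to `1 - c`. -/
def regRead : RegType → BM → BM × BM → Prop
  | _, BM.zero, p => p = (BM.zero, BM.zero)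
  | _, BM.one, p => p = (BM.one, BM.one)
  | RegType.simple, BM.metastable, p => p = (BM.metastable, BM.metastable)
  | RegType.mask0, BM.metastable, p => p = (BM.zero, BM.metastable) ∨ p = (BM.metastable, BM.one)
  | RegType.mask1, BM.metastable, p => p = (BM.one, BM.metastable) ∨ p = (BM.metastable, BM.zero)

/-- A circuit with `m` input, `k` local and `n` output registers: a type for each
register, combinational logic with `m + k` input nodes (one per non-output register)
and `k + n` output nodes (one per non-input register), and an initialization of the
non-input registers. -/
structure Circuit (m k n : ℕ) : Type where
  inType : Fin m → RegType
  locType : Fin k → RegType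
  outType : Fin n → RegType
  logic : Fin (k + n) → Comb (m + k)
  init : Fin (k + n) → BM

/-- A state of a circuit: values of input, local, and output registers. -/
structure CState (m k n : ℕ) : Type where
  inp : Fin m → BM
  loc : Fin k → BM
  out : Fin n → BM

/-- A state as a word in `BM^{m+k+n}`. -/
def CState.toVec {m k n : ℕ} (s : CState m k n) : Fin (m + (k + n)) → BM :=
  Fin.append s.inp (Fin.append s.loc s.out)

/-- Read phase: `o ∈ BM^{m+k}` are possible read values of the non-output registers
in state `s`, and `ι'` the corresponding successor states of the input registers. -/
def ReadRel {m k n : ℕ} (C : Circuit m k n) (s : CState m k n)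
    (o : Fin (m + k) → BM) (ι' : Fin m → BM) : Prop :=
  (∀ i : Fin m, regRead (C.inType i) (s.inp i) (o (Fin.castAdd k i), ι' i)) ∧
  (∀ j : Fin k, ∃ st', regRead (C.locType j) (s.loc j) (o (Fin.natAdd m j), st'))

/-- Evaluation phase: `f^G` applied to the read values. -/
noncomputable def evalLogic {m k n : ℕ} (C : Circuit m k n) (o : Fin (m + k) → BM) :
    Fin (k + n) → BM :=
  fun j => (C.logic j).eval o

/-- `Write^C(s)`: possible values written to the non-input registers. -/
def WriteSet {m k n : ℕ} (C : Circuit m k n) (s : CState m k n) :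
    Set (Fin (k + n) → BM) :=
  { w | ∃ o ι', ReadRel C s o ι' ∧ inResM (evalLogic C o) w }

/-- Successor-state relation: read all non-output registers, evaluate the logic,
and write an arbitrary partial resolution of the result to the non-input registers. -/
def Succ {m k n : ℕ} (C : Circuit m k n) (s s' : CState m k n) : Prop :=
  ∃ o ι', ReadRel C s o ι' ∧ s'.inp = ι' ∧
    inResM (evalLogic C o) (Fin.append s'.loc s'.out)

/-- `reach C r s₀ = S^C_r(s₀)`: states reachable in `r` rounds from `s₀`. -/
def reach {m k n : ℕ} (C : Circuit m k n) : ℕ → CState m k n → Set (CState m k n)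
  | 0, s => {s}
  | r + 1, s => { t | ∃ u ∈ reach C r s, Succ C u t }

/-- The initial state of `C` with input `ι`. -/
def initState {m k n : ℕ} (C : Circuit m k n) (ι : Fin m → BM) : CState m k n :=
  ⟨ι, fun j => C.init (Fin.castAdd n j), fun j => C.init (Fin.natAdd k j)⟩

/-- `C_r(ι)`: possible outputs after `r` rounds on input `ι`. -/
def Cout {m k n : ℕ} (C : Circuit m k n) (r : ℕ) (ι : Fin m → BM) :
    Set (Fin n → BM) :=
  { y | ∃ s ∈ reach C r (initState C ι), y = s.out }

/-- `r` rounds of `C` implement `f` iff `C_r(ι) ⊆ f(ι)` for all inputs `ι`. -/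
def Implements {m k n : ℕ} (C : Circuit m k n) (r : ℕ)
    (f : (Fin m → BM) → Set (Fin n → BM)) : Prop :=
  ∀ ι, Cout C r ι ⊆ f ι

/-- All registers of the circuit are simple. -/
def OnlySimple {m k n : ℕ} (C : Circuit m k n) : Prop :=
  (∀ i, C.inType i = RegType.simple) ∧ (∀ j, C.locType j = RegType.simple) ∧
    (∀ j, C.outType j = RegType.simple)

/-- `Fun_S^r`: functions implementable by `r` rounds of circuits with only simple
registers. -/
def FunS (r m n : ℕ) : Set ((Fin m → BM) → Set (Fin n → BM)) :=
  { f | ∃ k, ∃ C : Circuit m k n, OnlySimple C ∧ Implements C r f }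

/-- `Fun_M^r`: functions implementable by `r` rounds of circuits with arbitrary
register types. -/
def FunM (r m n : ℕ) : Set ((Fin m → BM) → Set (Fin n → BM)) :=
  { f | ∃ k, ∃ C : Circuit m k n, Implements C r f }

/-- A pivotal sequence over `BM^N`: consecutive elements differ in exactly one bit,
and that bit is `meta` in one of the two elements. -/
def PivotalSeq {N ℓ : ℕ} (x : Fin (ℓ + 1) → Fin N → BM) : Prop :=
  ∀ i : Fin ℓ,
    ∃ j : Fin N,
      x i.castSucc j ≠ x i.succ j ∧
      (x i.castSucc j = BM.metastable ∨ x i.succ j = BM.metastable) ∧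
      ∀ j' : Fin N, x i.castSucc j' ≠ x i.succ j' → j' = j

/-- A function `f : BM^m → Pow(BM^n)` is natural iff it is bit-wise and closed
(a product of component functions each taking values in `{{0}, {1}, BM}`)
and specific (stabilizing the input restricts the output). -/
def IsNatural {m n : ℕ} (f : (Fin m → BM) → Set (Fin n → BM)) : Prop :=
  (∃ g : Fin n → (Fin m → BM) → Set BM,
      (∀ i x, g i x = {BM.zero} ∨ g i x = {BM.one} ∨ g i x = (Set.univ : Set BM)) ∧
      (∀ x, f x = { y | ∀ i, y i ∈ g i x })) ∧
  (∀ x y, inRes x y → f y ⊆ f x)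

/-- The `i`-th component of the metastable closure of `f : B^m → B^n`. -/
noncomputable def mclosureC {m n : ℕ} (f : (Fin m → Bool) → Fin n → Bool)
    (x : Fin m → BM) (i : Fin n) : Set BM :=
  if ∀ z ∈ boolRes x, f z i = false then {BM.zero}
  else if ∀ z ∈ boolRes x, f z i = true then {BM.one}
  else Set.univ

/-- The metastable closure `[f]_M : BM^m → Pow(BM^n)` of `f : B^m → B^n`. -/
noncomputable def mclosure {m n : ℕ} (f : (Fin m → Bool) → Fin n → Bool)
    (x : Fin m → BM) : Set (Fin n → BM) :=
  { y | ∀ i, y i ∈ mclosureC f x i }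

/-- `Fun_M^r` as a class of functions of arbitrary arities. -/
def FunMAll (r : ℕ) : Set ((m : ℕ) × (n : ℕ) × ((Fin m → BM) → Set (Fin n → BM))) :=
  { F | ∃ k, ∃ C : Circuit F.1 k F.2.1, Implements C r F.2.2 }

/-- The word `0^i M 1^{r-i-1} ∈ BM^r`. -/
def fanoutWord (r i : ℕ) : Fin r → BM := fun j =>
  if (j : ℕ) < i then BM.zero else if (j : ℕ) = i then BM.metastable else BM.one

/-- The metastability-containing `r`-fold fan-out: `f(x) = {x^r}` for stable `x`,
and `f(M) = ⋃_{i ∈ [r]} ResM(0^i M 1^{r-i-1})`. -/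
def fanout (r : ℕ) : (Fin 1 → BM) → Set (Fin r → BM) := fun x =>
  match x 0 with
  | BM.metastable => { y | ∃ i : Fin r, inResM (fanoutWord r (i : ℕ)) y }
  | b => { fun _ => b }

/-!
Adding a round never hurts: a flag register lets a circuit spend its first round rewriting its
initialization. A run from a less stable state can mimic every step of a run from a more stable
one while writing the same values, and after at least one round the possible outputs are closed
under resolution, so the delayed circuit still implements the same function.

The fan-out is computed in `r` rounds by a mask-0 input register feeding a shift register: the
outputs are the read history `0^i M 1^{r-i-1}` (or `0^r`) of the input register.

It is not computed in `q < r` rounds. The states reachable in `q` rounds are connected under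
comparability, hence so are the outputs on input `M`, which include `0^r` and `1^r`.
Counting `0`, `M`, `1` as `0`, `1`, `2`, each output has at most one `M`, so the weight moves by at
most one along a path and all odd weights `1, 3, …, 2r - 1` occur, each on an output with an `M`.
Every run dominates the minimal run of its input-register history, and an output with an `M`
equals that minimal output. Within `q` rounds a register starting in `M` has at most `q` histories
whose minimal run can output an `M`, whence `r ≤ q`.
-/

/-! ### The information order -/

/-- The information order: `M` lies below both stable values, which are incomparable.
On words, `x ≤ y` says that `y ∈ ResM x`. -/
instance : PartialOrder BM where
  le a b := a = BM.metastable ∨ a = b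
  le_refl _ := Or.inr rfl
  le_trans _ _ _ := by
    rintro (h | rfl) h'
    exacts [Or.inl h, h']
  le_antisymm a b := by
    rintro (rfl | rfl) (h | h) <;> simp_all

namespace BM

theorem le_iff {a b : BM} : a ≤ b ↔ a = metastable ∨ a = b := Iff.rfl

@[simp] theorem metastable_le (a : BM) : metastable ≤ a := Or.inl rfl

theorem eq_of_le {a b : BM} (h : a ≤ b) (ha : a ≠ metastable) : a = b :=
  h.resolve_left ha

theorem eq_metastable_of_le {a b : BM} (h : a ≤ b) (hb : b = metastable) : a = metastable := by
  rcases h with h | rfl <;> simp_all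

theorem eq_ofBool_or_eq_metastable (a : BM) : (∃ b, a = ofBool b) ∨ a = metastable := by
  cases a
  exacts [Or.inl ⟨false, rfl⟩, Or.inl ⟨true, rfl⟩, Or.inr rfl]

@[simp] theorem ofBool_eq_zero_iff {b : Bool} : ofBool b = zero ↔ b = false := by
  cases b <;> simp [ofBool]

def resolve (b : Bool) : BM → Bool
  | zero => false
  | one => true
  | metastable => b

end BM

theorem inResM_iff_le {k : ℕ} {x y : Fin k → BM} : inResM x y ↔ x ≤ y := by
  simp only [inResM, Pi.le_def, BM.le_iff]
  exact forall_congr' fun _ => or_comm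

theorem Fin.append_le_iff {α : Type*} [Preorder α] {m n : ℕ} {a : Fin m → α} {b : Fin n → α}
    {f : Fin (m + n) → α} :
    Fin.append a b ≤ f ↔ (a ≤ fun i => f (Fin.castAdd n i)) ∧ b ≤ fun j => f (Fin.natAdd m j) := by
  simp [Pi.le_def, Fin.forall_fin_add]

theorem Fin.le_append_iff {α : Type*} [Preorder α] {m n : ℕ} {a : Fin m → α} {b : Fin n → α}
    {f : Fin (m + n) → α} :
    f ≤ Fin.append a b ↔
      ((fun i => f (Fin.castAdd n i)) ≤ a) ∧ (fun j => f (Fin.natAdd m j)) ≤ b := by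
  simp [Pi.le_def, Fin.forall_fin_add]

theorem Fin.append_le_append_iff {α : Type*} [Preorder α] {m n : ℕ} {a c : Fin m → α}
    {b d : Fin n → α} : Fin.append a b ≤ Fin.append c d ↔ a ≤ c ∧ b ≤ d := by
  simp [Pi.le_def, Fin.forall_fin_add]

section Kleene

variable {k : ℕ}

theorem resolve_mem_boolRes (x : Fin k → BM) (b : Bool) :
    (fun i => (x i).resolve b) ∈ boolRes x := by
  intro i
  cases h : x i <;> simp [BM.resolve, BM.ofBool, h]

theorem boolRes_anti : Antitone (boolRes (k := k)) := by
  intro x y h z hz i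
  rcases h i with h' | h'
  · exact Or.inr h'
  · exact h' ▸ hz i

theorem kleene_eq_ofBool_iff (f : (Fin k → Bool) → Bool) (x : Fin k → BM) (b : Bool) :
    kleene f x = BM.ofBool b ↔ ∀ z ∈ boolRes x, f z = b := by
  have hne := resolve_mem_boolRes x true
  unfold kleene
  cases b <;> split_ifs with h0 h1 <;> simp only [BM.ofBool, reduceCtorEq, true_iff, false_iff]
  all_goals first
    | assumption
    | exact fun h => by simpa [h0 _ hne] using h _ hne

theorem apply_eq_of_mem_boolRes {x : Fin k → BM} {z : Fin k → Bool} (hz : z ∈ boolRes x)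
    {i : Fin k} {b : Bool} (h : x i = BM.ofBool b) : z i = b := by
  have h' := hz i
  rw [h] at h'
  revert h'
  cases b <;> cases z i <;> simp [BM.ofBool]

theorem kleene_mono (f : (Fin k → Bool) → Bool) : Monotone (kleene f) := by
  intro x y h
  obtain ⟨b, hb⟩ | hM := (kleene f x).eq_ofBool_or_eq_metastable
  · have hy := (kleene_eq_ofBool_iff f y b).2
      fun z hz => (kleene_eq_ofBool_iff f x b).1 hb z (boolRes_anti h hz)
    rw [hb, hy]
  · simp [hM]

theorem kleene_eq_of_forall_eq_apply {f : (Fin k → Bool) → Bool} {x : Fin k → BM} (i : Fin k)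
    (hf : ∀ z ∈ boolRes x, f z = z i) : kleene f x = x i := by
  obtain ⟨b, hxi⟩ | hxi := (x i).eq_ofBool_or_eq_metastable
  · rw [hxi, kleene_eq_ofBool_iff]
    exact fun z hz => (hf z hz).trans (apply_eq_of_mem_boolRes hz hxi)
  · have hb : ∀ b, f (fun j => (x j).resolve b) = b := fun b => by
      rw [hf _ (resolve_mem_boolRes x b), hxi]; rfl
    unfold kleene
    rw [if_neg fun h => by simpa [hb] using h _ (resolve_mem_boolRes x true),
      if_neg fun h => by simpa [hb] using h _ (resolve_mem_boolRes x false), hxi]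

end Kleene

theorem Comb.eval_mono {m : ℕ} : ∀ c : Comb m, Monotone fun x => c.eval x
  | .input i => fun _ _ h => h i
  | .const _ => fun _ _ _ => le_rfl
  | .gate _ f cs => fun _ _ h => kleene_mono f fun t => Comb.eval_mono (cs t) h

theorem evalLogic_mono {m k n : ℕ} (C : Circuit m k n) : Monotone (evalLogic C) :=
  fun _ _ h j => (C.logic j).eval_mono h

section Registers

variable {τ : RegType} {a : BM}

theorem eq_of_regRead_of_ne_metastable {p : BM × BM} (ha : a ≠ BM.metastable) (h : regRead τ a p) :
    p = (a, a) := by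
  cases τ <;> cases a <;> simp_all [regRead]

theorem regRead_le {x s : BM} (h : regRead τ a (x, s)) : a ≤ x ∧ a ≤ s := by
  by_cases ha : a = BM.metastable
  · simp [ha]
  · obtain ⟨rfl, rfl⟩ := Prod.mk.inj (eq_of_regRead_of_ne_metastable ha h)
    exact ⟨le_rfl, le_rfl⟩

theorem exists_regRead_self (τ : RegType) (a : BM) : ∃ s, regRead τ a (a, s) := by
  cases τ <;> cases a <;> simp [regRead]

theorem exists_regRead_of_le {b x s : BM} (hab : a ≤ b) (h : regRead τ b (x, s)) :
    ∃ x' s', regRead τ a (x', s') ∧ x' ≤ x ∧ s' ≤ s := by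
  rcases hab with rfl | rfl
  · cases b <;> simp only [regRead, Prod.mk.injEq] at h
    case metastable => exact ⟨x, s, h, le_rfl, le_rfl⟩
    all_goals
      obtain ⟨rfl, rfl⟩ := h
      cases τ <;> simp [regRead, BM.le_iff, or_and_right, exists_or]
  · exact ⟨x, s, h, le_rfl, le_rfl⟩

theorem exists_regRead_le_le {x₁ s₁ x₂ s₂ : BM} (h₁ : regRead τ a (x₁, s₁))
    (h₂ : regRead τ a (x₂, s₂)) :
    ∃ x s, regRead τ a (x, s) ∧ x ≤ x₁ ∧ x ≤ x₂ ∧ s₁ ≤ s ∧ s₂ ≤ s := by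
  by_cases ha : a = BM.metastable
  · subst ha
    cases τ <;> simp only [regRead, Prod.mk.injEq] at h₁ h₂ <;>
      rcases h₁ with ⟨rfl, rfl⟩ | ⟨rfl, rfl⟩ <;> rcases h₂ with ⟨rfl, rfl⟩ | ⟨rfl, rfl⟩ <;>
      simp_all [regRead, BM.le_iff, or_and_right, exists_or]
  · obtain ⟨rfl, rfl⟩ := Prod.mk.inj (eq_of_regRead_of_ne_metastable ha h₁)
    obtain ⟨rfl, rfl⟩ := Prod.mk.inj (eq_of_regRead_of_ne_metastable ha h₂)
    exact ⟨_, _, h₁, le_rfl, le_rfl, le_rfl, le_rfl⟩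

end Registers

/-! ### Simulation -/

namespace CState

variable {m k n : ℕ}

instance : PartialOrder (CState m k n) :=
  PartialOrder.lift (fun s => (s.inp, s.loc, s.out)) fun s t h => by
    cases s; cases t; cases h; rfl

theorem le_def {s t : CState m k n} : s ≤ t ↔ s.inp ≤ t.inp ∧ s.loc ≤ t.loc ∧ s.out ≤ t.out :=
  Iff.rfl

def regs (s : CState m k n) : Fin (k + n) → BM :=
  Fin.append s.loc s.out

def ofRegs (ι : Fin m → BM) (w : Fin (k + n) → BM) : CState m k n :=
  ⟨ι, fun j => w (Fin.castAdd n j), fun j => w (Fin.natAdd k j)⟩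

@[simp] theorem ofRegs_inp (ι : Fin m → BM) (w : Fin (k + n) → BM) :
    (ofRegs ι w : CState m k n).inp = ι := rfl

@[simp] theorem regs_ofRegs (ι : Fin m → BM) (w : Fin (k + n) → BM) :
    (ofRegs ι w : CState m k n).regs = w :=
  Fin.append_castAdd_natAdd

theorem le_iff_regs {s t : CState m k n} : s ≤ t ↔ s.inp ≤ t.inp ∧ s.regs ≤ t.regs := by
  rw [le_def, regs, regs, Fin.append_le_append_iff]

theorem out_mono : Monotone (out : CState m k n → Fin n → BM) :=
  fun _ _ h => (le_def.1 h).2.2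

end CState

section Simulation

variable {m k n : ℕ} (C : Circuit m k n)

theorem succ_iff {s s' : CState m k n} :
    Succ C s s' ↔ ∃ o, ReadRel C s o s'.inp ∧ evalLogic C o ≤ s'.regs := by
  simp only [Succ, inResM_iff_le, CState.regs]
  exact ⟨fun ⟨o, _, h, rfl, hw⟩ => ⟨o, h, hw⟩, fun ⟨o, h, hw⟩ => ⟨o, _, h, rfl, hw⟩⟩

theorem succ_ofRegs {s : CState m k n} {o : Fin (m + k) → BM} {ι' : Fin m → BM}
    (h : ReadRel C s o ι') {w : Fin (k + n) → BM} (hw : evalLogic C o ≤ w) :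
    Succ C s (CState.ofRegs ι' w) :=
  (succ_iff C).2 ⟨o, h, by simpa using hw⟩

theorem exists_succ (s : CState m k n) : ∃ s', Succ C s s' := by
  choose ι' hι' using fun i => exists_regRead_self (C.inType i) (s.inp i)
  have h : ReadRel C s (Fin.append s.inp s.loc) ι' :=
    ⟨fun i => by simpa using hι' i, fun j => by simpa using exists_regRead_self _ _⟩
  exact ⟨_, succ_ofRegs C h le_rfl⟩

theorem reach_nonempty (t : ℕ) (s₀ : CState m k n) : (reach C t s₀).Nonempty := by
  induction t with
  | zero => exact ⟨s₀, rfl⟩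
  | succ t ih =>
    obtain ⟨s, hs⟩ := ih
    obtain ⟨s', hs'⟩ := exists_succ C s
    exact ⟨s', s, hs, hs'⟩

theorem succ_of_regs_le {p s s' : CState m k n} (h : Succ C p s) (hinp : s.inp = s'.inp)
    (hregs : s.regs ≤ s'.regs) : Succ C p s' := by
  obtain ⟨o, hr, hw⟩ := (succ_iff C).1 h
  exact (succ_iff C).2 ⟨o, hinp ▸ hr, hw.trans hregs⟩

theorem exists_succ_of_le {s t t' : CState m k n} (hst : s ≤ t) (h : Succ C t t') :
    ∃ s', Succ C s s' ∧ s'.inp ≤ t'.inp ∧ s'.regs = t'.regs := by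
  obtain ⟨o, ⟨hin, hloc⟩, hw⟩ := (succ_iff C).1 h
  obtain ⟨hinp, hloc_le, -⟩ := CState.le_def.1 hst
  choose xin stin hxin hxle hstle using fun i => exists_regRead_of_le (hinp i) (hin i)
  have hloc' : ∀ j, ∃ x, (∃ st, regRead (C.locType j) (s.loc j) (x, st)) ∧
      x ≤ o (Fin.natAdd m j) := fun j => by
    obtain ⟨_, hst'⟩ := hloc j
    obtain ⟨x, _, hr, hx, -⟩ := exists_regRead_of_le (hloc_le j) hst'
    exact ⟨x, ⟨_, hr⟩, hx⟩
  choose xloc hxloc hxlocle using hloc'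
  have hread : ReadRel C s (Fin.append xin xloc) stin :=
    ⟨fun i => by simpa using hxin i, fun j => by simpa using hxloc j⟩
  have hle : Fin.append xin xloc ≤ o := Fin.append_le_iff.2 ⟨hxle, hxlocle⟩
  exact ⟨_, succ_ofRegs C hread ((evalLogic_mono C hle).trans hw), hstle, by simp⟩

theorem reach_sim {s₀ t₀ : CState m k n} (h₀ : s₀ ≤ t₀) :
    ∀ t, ∀ u ∈ reach C t t₀, ∃ s ∈ reach C t s₀, s ≤ u
  | 0, _, rfl => ⟨s₀, rfl, h₀⟩
  | t + 1, _, ⟨v, hv, hvu⟩ => by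
    obtain ⟨s, hs, hsv⟩ := reach_sim h₀ t v hv
    obtain ⟨s', hss', hinp, hregs⟩ := exists_succ_of_le C hsv hvu
    exact ⟨s', ⟨s, hs, hss'⟩, CState.le_iff_regs.2 ⟨hinp, hregs.le⟩⟩

theorem isUpperSet_cout (t : ℕ) (ι : Fin m → BM) : IsUpperSet (Cout C (t + 1) ι) := by
  rintro _ y' hy ⟨s, ⟨p, hp, hps⟩, rfl⟩
  refine ⟨⟨s.inp, s.loc, y'⟩, ⟨p, hp, succ_of_regs_le C hps rfl ?_⟩, rfl⟩
  exact Fin.append_le_append_iff.2 ⟨le_rfl, hy⟩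

theorem cout_antitone (t : ℕ) : Antitone (Cout C (t + 1)) := by
  rintro ι ι' h _ ⟨u, hu, rfl⟩
  obtain ⟨s, hs, hsu⟩ := reach_sim C (t₀ := initState C ι') (s₀ := initState C ι)
    (CState.le_def.2 ⟨h, le_rfl, le_rfl⟩) (t + 1) u hu
  exact isUpperSet_cout C t ι (CState.out_mono hsu) ⟨s, hs, rfl⟩

end Simulation

/-! ### Minimal runs -/

section MinRun

variable {m k n : ℕ} (C : Circuit m k n)

/-- `σ u` and `ρ u` are the states of the input registers before round `u + 1` and the values
read from them in that round, for the first `t` rounds. -/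
def IsInputHistory (σ ρ : ℕ → Fin m → BM) (t : ℕ) : Prop :=
  ∀ u < t, ∀ i, regRead (C.inType i) (σ u i) (ρ u i, σ (u + 1) i)

noncomputable def minRun (ρ : ℕ → Fin m → BM) : ℕ → Fin (k + n) → BM
  | 0 => C.init
  | t + 1 => evalLogic C (Fin.append (ρ t) fun j => minRun ρ t (Fin.castAdd n j))

theorem minRun_congr {ρ ρ' : ℕ → Fin m → BM} :
    ∀ {t}, (∀ u < t, ρ u = ρ' u) → minRun C ρ t = minRun C ρ' t
  | 0, _ => rfl
  | t + 1, h => by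
    simp only [minRun, h t t.lt_succ_self, minRun_congr fun u hu => h u (hu.trans t.lt_succ_self)]

theorem ofRegs_minRun_mem_reach {σ ρ : ℕ → Fin m → BM} :
    ∀ {t}, IsInputHistory C σ ρ t →
      CState.ofRegs (σ t) (minRun C ρ t) ∈ reach C t (initState C (σ 0))
  | 0, _ => rfl
  | t + 1, h => by
    refine ⟨_, ofRegs_minRun_mem_reach fun u hu => h u (hu.trans t.lt_succ_self), ?_⟩
    refine succ_ofRegs C ⟨fun i => ?_, fun j => ?_⟩ le_rfl
    · simpa using h t t.lt_succ_self i
    · simpa [CState.ofRegs] using exists_regRead_self _ _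

theorem exists_minRun_le (ι : Fin m → BM) :
    ∀ t, ∀ s ∈ reach C t (initState C ι), ∃ σ ρ, σ 0 = ι ∧ IsInputHistory C σ ρ t ∧
      σ t = s.inp ∧ minRun C ρ t ≤ s.regs
  | 0, _, rfl => ⟨fun _ => ι, fun _ => ι, rfl, fun _ h => absurd h (Nat.not_lt_zero _), rfl,
      (CState.regs_ofRegs ι C.init).ge⟩
  | t + 1, s', ⟨s, hs, hss'⟩ => by
    obtain ⟨σ, ρ, hσ₀, hhist, hσt, hle⟩ := exists_minRun_le ι t s hs
    obtain ⟨o, ⟨hin, hloc⟩, hw⟩ := (succ_iff C).1 hss'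
    refine ⟨Function.update σ (t + 1) s'.inp, Function.update ρ t fun i => o (Fin.castAdd k i),
      by simp [hσ₀], fun u hu i => ?_, by simp, ?_⟩
    · rcases (Nat.lt_succ_iff_lt_or_eq.1 hu) with hu | rfl
      · simpa [hu.ne, (Nat.succ_lt_succ hu).ne, (hu.trans t.lt_succ_self).ne] using hhist u hu i
      · simpa [hσt] using hin i
    · have hρ : minRun C (Function.update ρ t fun i => o (Fin.castAdd k i)) t = minRun C ρ t :=
        minRun_congr C fun u hu => by simp [hu.ne]
      have hread : Fin.append (fun i => o (Fin.castAdd k i))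
          (fun j => minRun C ρ t (Fin.castAdd n j)) ≤ o := by
        refine Fin.append_le_iff.2 ⟨le_rfl, fun j => ?_⟩
        have hj : minRun C ρ t (Fin.castAdd n j) ≤ s.loc j := by
          simpa [CState.regs] using hle (Fin.castAdd n j)
        exact hj.trans (regRead_le (hloc j).choose_spec).1
      simp only [minRun, Function.update_self, hρ]
      exact (evalLogic_mono C hread).trans hw

end MinRun

namespace RegType

/-- The value a metastable register yields while masking (`M` for a simple register). -/
def maskedRead : RegType → BM
  | simple => BM.metastable
  | mask0 => BM.zero
  | mask1 => BM.one

/-- The state of a metastable register after a read has yielded `M`. -/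
def flipped : RegType → BM
  | simple => BM.metastable
  | mask0 => BM.one
  | mask1 => BM.zero

/-- The reads (and, in `metaState`, the states) of a register that starts in state `M` and first
yields `M` in round `θ + 1`. -/
def metaRead (τ : RegType) (θ t : ℕ) : BM :=
  if t < θ then τ.maskedRead else if t = θ then BM.metastable else τ.flipped

def metaState (τ : RegType) (θ t : ℕ) : BM :=
  if t ≤ θ then BM.metastable else τ.flipped

theorem regRead_metastable_iff {τ : RegType} {p : BM × BM} :
    regRead τ BM.metastable p ↔
      p = (τ.maskedRead, BM.metastable) ∨ p = (BM.metastable, τ.flipped) := by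
  cases τ <;> simp [regRead, maskedRead, flipped]

theorem regRead_flipped_iff {τ : RegType} {p : BM × BM} :
    regRead τ τ.flipped p ↔ p = (τ.flipped, τ.flipped) := by
  cases τ <;> simp [regRead, flipped]

theorem regRead_metaState (τ : RegType) (θ t : ℕ) :
    regRead τ (τ.metaState θ t) (τ.metaRead θ t, τ.metaState θ (t + 1)) := by
  rcases lt_trichotomy t θ with h | rfl | h
  · simp [metaState, metaRead, h, Nat.succ_le_of_lt h, h.le, regRead_metastable_iff]
  · simp [metaState, metaRead, regRead_metastable_iff]
  · simp [metaState, metaRead, show ¬t ≤ θ by omega, show ¬t < θ by omega, show t ≠ θ by omega,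
      show ¬t + 1 ≤ θ by omega, regRead_flipped_iff]

theorem exists_metaRead (τ : RegType) {σ ρ : ℕ → BM} (hσ : σ 0 = BM.metastable) :
    ∀ t, (∀ u < t, regRead τ (σ u) (ρ u, σ (u + 1))) →
      ∃ θ ≤ t, σ t = τ.metaState θ t ∧ ∀ u < t, ρ u = τ.metaRead θ u
  | 0, _ => ⟨0, le_rfl, by simp [hσ, metaState], fun _ h => absurd h (Nat.not_lt_zero _)⟩
  | t + 1, h => by
    obtain ⟨θ, hθ, hσt, hρ⟩ := exists_metaRead τ hσ t fun u hu => h u (hu.trans t.lt_succ_self)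
    have hread := h t t.lt_succ_self
    rcases hθ.lt_or_eq with hθ | rfl
    · rw [hσt, metaState, if_neg (by omega), regRead_flipped_iff, Prod.mk.injEq] at hread
      refine ⟨θ, by omega, ?_, fun u hu => ?_⟩
      · simp [metaState, hread.2, show ¬ t + 1 ≤ θ by omega]
      · rcases (Nat.lt_succ_iff_lt_or_eq.1 hu) with hu | rfl
        · exact hρ u hu
        · simp [metaRead, hread.1, show ¬u < θ by omega, show u ≠ θ by omega]
    · rw [hσt, metaState, if_pos le_rfl, regRead_metastable_iff] at hread
      rcases hread with hread | hread <;> rw [Prod.mk.injEq] at hread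
      · refine ⟨θ + 1, le_rfl, by simp [metaState, hread.2], fun u hu => ?_⟩
        rcases (Nat.lt_succ_iff_lt_or_eq.1 hu) with hu | rfl
        · simp [hρ u hu, metaRead, hu, hu.trans θ.lt_succ_self]
        · simp [metaRead, hread.1]
      · refine ⟨θ, θ.le_succ, by simp [metaState, hread.2], fun u hu => ?_⟩
        rcases (Nat.lt_succ_iff_lt_or_eq.1 hu) with hu | rfl
        · exact hρ u hu
        · simp [metaRead, hread.1]

theorem history_const_of_ne_metastable (τ : RegType) {σ ρ : ℕ → BM} (hσ : σ 0 ≠ BM.metastable) :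
    ∀ t, (∀ u < t, regRead τ (σ u) (ρ u, σ (u + 1))) → σ t = σ 0 ∧ ∀ u < t, ρ u = σ 0
  | 0, _ => ⟨rfl, fun _ h => absurd h (Nat.not_lt_zero _)⟩
  | t + 1, h => by
    obtain ⟨hσt, hρ⟩ :=
      history_const_of_ne_metastable τ hσ t fun u hu => h u (hu.trans t.lt_succ_self)
    obtain ⟨hread, hstate⟩ :=
      Prod.mk.inj (eq_of_regRead_of_ne_metastable hσ (hσt ▸ h t t.lt_succ_self))
    refine ⟨hstate, fun u hu => ?_⟩
    rcases (Nat.lt_succ_iff_lt_or_eq.1 hu) with hu | rfl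
    · exact hρ u hu
    · exact hread

end RegType

/-! ### The fan-out in `r` rounds -/

/-- A mask-0 input register feeding a shift register of `r` simple local registers; output `j`
copies the value read from the input in round `j + 1`. -/
def fanCircuit (r : ℕ) : Circuit 1 r (r + 1) where
  inType _ := RegType.mask0
  locType _ := RegType.simple
  outType _ := RegType.simple
  logic := Fin.append (fun j => .input (Fin.castLE (by omega) j))
    fun j => .input (Fin.cast (by omega) j.rev)
  init _ := BM.zero

section FanCircuit

variable {r : ℕ} (ρ : ℕ → Fin 1 → BM)

theorem evalLogic_fanCircuit_loc (o : Fin (1 + r) → BM) (j : Fin r) :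
    evalLogic (fanCircuit r) o (Fin.castAdd (r + 1) j) = o (Fin.castLE (by omega) j) := by
  simp [evalLogic, fanCircuit, Comb.eval]

theorem evalLogic_fanCircuit_out (o : Fin (1 + r) → BM) (j : Fin (r + 1)) :
    evalLogic (fanCircuit r) o (Fin.natAdd r j) = o (Fin.cast (by omega) j.rev) := by
  simp [evalLogic, fanCircuit, Comb.eval]

theorem fanCircuit_read :
    ∀ t, ∀ d : Fin (1 + r), (d : ℕ) ≤ t →
      Fin.append (ρ t) (fun j => minRun (fanCircuit r) ρ t (Fin.castAdd (r + 1) j)) d =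
        ρ (t - d) 0 := by
  intro t
  induction t with
  | zero =>
    intro d hd
    obtain rfl : d = Fin.castAdd r 0 := Fin.ext (by simpa using hd)
    simp
  | succ t ih =>
    intro d
    refine Fin.addCases (fun i _ => ?_) (fun j hj => ?_) d
    · simp [Fin.fin_one_eq_zero i]
    · rw [Fin.append_right, minRun, evalLogic_fanCircuit_loc,
        ih _ (by simp at hj ⊢; omega)]
      congr 1
      simp
      omega

theorem fanCircuit_out (j : Fin (r + 1)) :
    minRun (fanCircuit r) ρ (r + 1) (Fin.natAdd r j) = ρ j 0 := by
  rw [minRun, evalLogic_fanCircuit_out, fanCircuit_read ρ r _ (by simp)]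
  congr 1
  simp
  omega

end FanCircuit

/-- If the input never yields `M` (`θ = r + 1`), its read history `0^{r+1}` resolves `0^r M`. -/
theorem fanoutWord_le_metaRead {r θ : ℕ} (hθ : θ ≤ r + 1) :
    fanoutWord (r + 1) (min θ r) ≤ fun j : Fin (r + 1) => RegType.mask0.metaRead θ j := by
  intro j
  simp only [fanoutWord, RegType.metaRead, RegType.maskedRead, RegType.flipped]
  split_ifs <;> first | rfl | simp | omega

theorem fanCircuit_implements (r : ℕ) : Implements (fanCircuit r) (r + 1) (fanout (r + 1)) := by
  rintro ι _ ⟨s, hs, rfl⟩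
  obtain ⟨σ, ρ, hσ₀, hhist, -, hle⟩ := exists_minRun_le _ ι (r + 1) s hs
  have hout : (fun j : Fin (r + 1) => ρ j 0) ≤ s.out := fun j => by
    simpa [CState.regs, fanCircuit_out] using hle (Fin.natAdd r j)
  have hread : ∀ u < r + 1, regRead RegType.mask0 (σ u 0) (ρ u 0, σ (u + 1) 0) :=
    fun u hu => hhist u hu 0
  cases hι : ι 0 with
  | metastable =>
    obtain ⟨θ, hθ, -, hρ⟩ := RegType.mask0.exists_metaRead (σ := fun u => σ u 0)
      (ρ := fun u => ρ u 0) (by simp [hσ₀, hι]) (r + 1) hread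
    simp only [fanout, hι]
    refine ⟨⟨min θ r, by omega⟩, inResM_iff_le.2 ((fanoutWord_le_metaRead hθ).trans ?_)⟩
    exact fun j => (hρ j j.isLt).symm.trans_le (hout j)
  | zero | one =>
    obtain ⟨-, hρ⟩ := RegType.mask0.history_const_of_ne_metastable (σ := fun u => σ u 0)
      (ρ := fun u => ρ u 0) (by simp [hσ₀, hι]) (r + 1) hread
    simp only [fanout, hι, Set.mem_singleton_iff]
    funext j
    refine (BM.eq_of_le (le_trans (le_of_eq ?_) (hout j)) (by simp)).symm
    simp [hρ j j.isLt, hσ₀, hι]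

theorem fanout_mem_funM (r : ℕ) : fanout (r + 1) ∈ FunM (r + 1) 1 (r + 1) :=
  ⟨r, fanCircuit r, fanCircuit_implements r⟩

/-! ### Delaying a circuit by one round -/

namespace Comb

def relabel {m m' : ℕ} (f : Fin m → Fin m') : Comb m → Comb m'
  | input i => input (f i)
  | const b => const b
  | gate j g cs => gate j g fun t => (cs t).relabel f

theorem eval_relabel {m m' : ℕ} (f : Fin m → Fin m') (x : Fin m' → BM) :
    ∀ c : Comb m, (c.relabel f).eval x = c.eval (x ∘ f)
  | input _ => rfl
  | const _ => rfl
  | gate _ g cs => by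
    simp only [relabel, eval]
    exact congrArg (kleene g) (funext fun t => eval_relabel f x (cs t))

def mux {m : ℕ} (sel a b : Comb m) : Comb m :=
  gate 3 (fun z => cond (z 0) (z 1) (z 2)) ![sel, a, b]

variable {m : ℕ} {x : Fin m → BM}

theorem eval_mux_of_eq_one (sel a b : Comb m) (h : sel.eval x = BM.one) :
    (mux sel a b).eval x = a.eval x := by
  refine kleene_eq_of_forall_eq_apply (1 : Fin 3) fun z hz => ?_
  simp [apply_eq_of_mem_boolRes (i := 0) (b := true) hz h]

theorem eval_mux_of_eq_zero (sel a b : Comb m) (h : sel.eval x = BM.zero) :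
    (mux sel a b).eval x = b.eval x := by
  refine kleene_eq_of_forall_eq_apply (2 : Fin 3) fun z hz => ?_
  simp [apply_eq_of_mem_boolRes (i := 0) (b := false) hz h]

end Comb

section Delay

variable {m k n : ℕ} (C : Circuit m k n)

/-- Register `j` of `C` is computed as in `C` once the flag register (the last local one) is `1`,
and reinitialized while it is `0`. -/
def delayGate (j : Fin (k + n)) : Comb (m + (k + 1)) :=
  .mux (.input (Fin.last (m + k))) ((C.logic j).relabel Fin.castSucc) (.const (C.init j))

/-- `C` preceded by one idle round, counted by a flag register. -/
def delayCircuit : Circuit m (k + 1) n where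
  inType := C.inType
  locType := Fin.snoc C.locType RegType.simple
  outType := C.outType
  logic := Fin.append (Fin.snoc (fun j => delayGate C (Fin.castAdd n j)) (.const BM.one))
    fun j => delayGate C (Fin.natAdd k j)
  init := Fin.append (Fin.snoc (fun j => C.init (Fin.castAdd n j)) BM.zero)
    fun j => C.init (Fin.natAdd k j)

def CState.dropFlag (s : CState m (k + 1) n) : CState m k n :=
  ⟨s.inp, Fin.init s.loc, s.out⟩

variable {C}

theorem eval_delayGate_of_eq_one {o : Fin (m + (k + 1)) → BM} (h : o (Fin.last (m + k)) = BM.one)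
    (j : Fin (k + n)) : (delayGate C j).eval o = evalLogic C (fun i => o i.castSucc) j := by
  rw [delayGate, Comb.eval_mux_of_eq_one (.input _) _ _ h, Comb.eval_relabel]
  rfl

theorem eval_delayGate_of_eq_zero {o : Fin (m + (k + 1)) → BM} (h : o (Fin.last (m + k)) = BM.zero)
    (j : Fin (k + n)) : (delayGate C j).eval o = C.init j := by
  rw [delayGate, Comb.eval_mux_of_eq_zero (.input _) _ _ h]
  rfl

theorem evalLogic_delayCircuit_le {o : Fin (m + (k + 1)) → BM} {s : CState m (k + 1) n}
    (h : evalLogic (delayCircuit C) o ≤ s.regs) :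
    (fun j => (delayGate C j).eval o) ≤ s.dropFlag.regs := by
  intro c
  refine Fin.addCases (fun j => ?_) (fun j => ?_) c
  · simpa [evalLogic, delayCircuit, CState.regs, CState.dropFlag, Fin.init]
      using h (Fin.castAdd n j.castSucc)
  · simpa [evalLogic, delayCircuit, CState.regs, CState.dropFlag] using h (Fin.natAdd (k + 1) j)

theorem succ_delayCircuit_flag {s s' : CState m (k + 1) n} (h : Succ (delayCircuit C) s s') :
    s'.loc (Fin.last k) = BM.one := by
  obtain ⟨o, -, hw⟩ := (succ_iff _).1 h
  have := hw (Fin.castAdd n (Fin.last k))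
  simp only [evalLogic, delayCircuit, CState.regs, Fin.append_left, Fin.snoc_last] at this
  exact (BM.eq_of_le this (by simp [Comb.eval])).symm

theorem succ_delayCircuit_read {s s' : CState m (k + 1) n} {b : BM} (hb : b ≠ BM.metastable)
    (h : Succ (delayCircuit C) s s') (hflag : s.loc (Fin.last k) = b) :
    ∃ o, ReadRel C s.dropFlag (fun i => o i.castSucc) s'.inp ∧ o (Fin.last (m + k)) = b ∧
      (fun j => (delayGate C j).eval o) ≤ s'.dropFlag.regs := by
  obtain ⟨o, ⟨hin, hloc⟩, hw⟩ := (succ_iff _).1 h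
  refine ⟨o, ⟨hin, fun j => ?_⟩, ?_, evalLogic_delayCircuit_le hw⟩
  · simpa [delayCircuit, CState.dropFlag, Fin.init] using hloc j.castSucc
  obtain ⟨st, hst⟩ := hloc (Fin.last k)
  rw [hflag] at hst
  exact (Prod.mk.inj (eq_of_regRead_of_ne_metastable hb hst)).1

theorem succ_dropFlag {s s' : CState m (k + 1) n} (h : Succ (delayCircuit C) s s')
    (hflag : s.loc (Fin.last k) = BM.one) : Succ C s.dropFlag s'.dropFlag := by
  obtain ⟨o, hread, ho, hw⟩ := succ_delayCircuit_read (by simp) h hflag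
  exact (succ_iff C).2 ⟨_, hread, le_trans (fun j => (eval_delayGate_of_eq_one ho j).ge) hw⟩

theorem le_dropFlag_of_succ {s s' : CState m (k + 1) n} (h : Succ (delayCircuit C) s s')
    (hflag : s.loc (Fin.last k) = BM.zero) :
    CState.ofRegs s.inp C.init ≤ s'.dropFlag := by
  obtain ⟨o, hread, ho, hw⟩ := succ_delayCircuit_read (by simp) h hflag
  refine CState.le_iff_regs.2 ⟨fun i => (regRead_le (hread.1 i)).2, ?_⟩
  simpa [eval_delayGate_of_eq_zero ho] using hw

theorem delayCircuit_reach (ι : Fin m → BM) :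
    ∀ t, ∀ s ∈ reach (delayCircuit C) (t + 1) (initState (delayCircuit C) ι),
      s.loc (Fin.last k) = BM.one ∧ ∃ s₀ ∈ reach C t (initState C ι), s₀ ≤ s.dropFlag
  | 0, s, ⟨p, hp, hps⟩ => by
    rw [reach, Set.mem_singleton_iff] at hp
    subst hp
    exact ⟨succ_delayCircuit_flag hps, _, rfl,
      le_dropFlag_of_succ hps (by simp [initState, delayCircuit])⟩
  | t + 1, s', ⟨s, hs, hss'⟩ => by
    obtain ⟨hflag, s₀, hs₀, hle⟩ := delayCircuit_reach ι t s hs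
    obtain ⟨s₀', hs₀', hinp, hregs⟩ := exists_succ_of_le C hle (succ_dropFlag hss' hflag)
    exact ⟨succ_delayCircuit_flag hss', s₀', ⟨s₀, hs₀, hs₀'⟩,
      CState.le_iff_regs.2 ⟨hinp, hregs.le⟩⟩

theorem delayCircuit_implements {t : ℕ} {f : (Fin m → BM) → Set (Fin n → BM)}
    (hC : Implements C (t + 1) f) : Implements (delayCircuit C) (t + 2) f := by
  rintro ι _ ⟨s, hs, rfl⟩
  obtain ⟨-, s₀, hs₀, hle⟩ := delayCircuit_reach ι (t + 1) s hs
  exact hC ι (isUpperSet_cout C t ι (CState.out_mono hle : s₀.out ≤ s.dropFlag.out)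
    ⟨s₀, hs₀, rfl⟩)

end Delay

theorem funMAll_subset_succ {r : ℕ} (hr : 0 < r) : FunMAll r ⊆ FunMAll (r + 1) := by
  obtain ⟨t, rfl⟩ := Nat.exists_eq_add_of_lt hr
  rintro ⟨m, n, f⟩ ⟨k, C, hC⟩
  exact ⟨k + 1, delayCircuit C, delayCircuit_implements (by simpa using hC)⟩

/-! ### Connectivity of the reachable states -/

section CompPath

variable {α : Type*} [Preorder α] {S T : Set α} {a b : α}

def CompPath (S : Set α) : α → α → Prop :=
  Relation.ReflTransGen fun x y => x ∈ S ∧ y ∈ S ∧ Relation.SymmGen (· ≤ ·) x y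

theorem CompPath.symm (h : CompPath S a b) : CompPath S b a := by
  induction h with
  | refl => exact Relation.ReflTransGen.refl
  | tail _ hstep ih => exact ih.head ⟨hstep.2.1, hstep.1, hstep.2.2.symm⟩

theorem CompPath.trans {c : α} (hab : CompPath S a b) (hbc : CompPath S b c) : CompPath S a c :=
  Relation.ReflTransGen.trans hab hbc

theorem CompPath.mono (hST : S ⊆ T) (h : CompPath S a b) : CompPath T a b :=
  Relation.ReflTransGen.mono (fun _ _ h => ⟨hST h.1, hST h.2.1, h.2.2⟩) _ _ h

theorem CompPath.of_le (ha : a ∈ S) (hb : b ∈ S) (hab : a ≤ b) : CompPath S a b :=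
  Relation.ReflTransGen.single ⟨ha, hb, .of_le hab⟩

theorem CompPath.map {β : Type*} [Preorder β] {f : α → β} (hf : Monotone f) {U : Set β}
    (hSU : ∀ x ∈ S, f x ∈ U) (h : CompPath S a b) : CompPath U (f a) (f b) :=
  Relation.ReflTransGen.lift f (fun x y h => ⟨hSU x h.1, hSU y h.2.1,
    Or.elim h.2.2 (fun h => .of_le (hf h)) fun h => .of_ge (hf h)⟩) _ _ h

end CompPath

section Connectivity

variable {m k n : ℕ} (C : Circuit m k n)

theorem compPath_succ_of_read {p u : CState m k n} {o₁ o : Fin (m + k) → BM}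
    {ι : Fin m → BM} (h₁ : ReadRel C p o₁ u.inp) (hw : evalLogic C o₁ ≤ u.regs)
    (h : ReadRel C p o ι) (ho : o ≤ o₁) (hι : u.inp ≤ ι) :
    CompPath {s | Succ C p s} u (CState.ofRegs ι (evalLogic C o)) := by
  -- The path `u ≥ A ≤ B ≥ D`, where `A` reads the inputs as in `o₁` and the local registers
  -- as in `o`, and `B` writes what `A` writes while reading as `D` does.
  set o' : Fin (m + k) → BM := Fin.append (fun i => o₁ (Fin.castAdd k i))
    fun j => o (Fin.natAdd m j)
  have h' : ReadRel C p o' u.inp := ⟨fun i => by simpa [o'] using h₁.1 i,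
    fun j => by simpa [o'] using h.2 j⟩
  have hoo' : o ≤ o' := Fin.le_append_iff.2 ⟨fun i => ho _, le_rfl⟩
  have ho'₁ : o' ≤ o₁ := Fin.append_le_iff.2 ⟨le_rfl, fun j => ho _⟩
  let S := {s | Succ C p s}
  have hu : u ∈ S := (succ_iff C).2 ⟨o₁, h₁, hw⟩
  have hA : CState.ofRegs u.inp (evalLogic C o') ∈ S := succ_ofRegs C h' le_rfl
  have hB : CState.ofRegs ι (evalLogic C o') ∈ S := succ_ofRegs C h (evalLogic_mono C hoo')
  have hD : CState.ofRegs ι (evalLogic C o) ∈ S := succ_ofRegs C h le_rfl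
  refine (CompPath.of_le hA hu ?_).symm.trans
    ((CompPath.of_le hA hB ?_).trans (CompPath.of_le hD hB ?_).symm)
  · exact CState.le_iff_regs.2 ⟨le_rfl, by simpa using (evalLogic_mono C ho'₁).trans hw⟩
  · exact CState.le_iff_regs.2 ⟨hι, le_rfl⟩
  · exact CState.le_iff_regs.2 ⟨le_rfl, by simpa using evalLogic_mono C hoo'⟩

theorem compPath_succ {p u₁ u₂ : CState m k n} (h₁ : Succ C p u₁) (h₂ : Succ C p u₂) :
    CompPath {s | Succ C p s} u₁ u₂ := by
  obtain ⟨o₁, hr₁, hw₁⟩ := (succ_iff C).1 h₁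
  obtain ⟨o₂, hr₂, hw₂⟩ := (succ_iff C).1 h₂
  choose xin ι hxin hx₁ hx₂ hι₁ hι₂ using fun i => exists_regRead_le_le (hr₁.1 i) (hr₂.1 i)
  have hloc : ∀ j, ∃ x, (∃ st, regRead (C.locType j) (p.loc j) (x, st)) ∧
      x ≤ o₁ (Fin.natAdd m j) ∧ x ≤ o₂ (Fin.natAdd m j) := fun j => by
    obtain ⟨_, hst₁⟩ := hr₁.2 j
    obtain ⟨_, hst₂⟩ := hr₂.2 j
    obtain ⟨x, st, hst, hx₁, hx₂, -⟩ := exists_regRead_le_le hst₁ hst₂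
    exact ⟨x, ⟨st, hst⟩, hx₁, hx₂⟩
  choose xloc hxloc hxl₁ hxl₂ using hloc
  have hread : ReadRel C p (Fin.append xin xloc) ι :=
    ⟨fun i => by simpa using hxin i, fun j => by simpa using hxloc j⟩
  exact (compPath_succ_of_read C hr₁ hw₁ hread (Fin.append_le_iff.2 ⟨hx₁, hxl₁⟩) hι₁).trans
    (compPath_succ_of_read C hr₂ hw₂ hread (Fin.append_le_iff.2 ⟨hx₂, hxl₂⟩) hι₂).symm

theorem exists_comparable_succ {a b : CState m k n} (h : Relation.SymmGen (· ≤ ·) a b) :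
    ∃ a' b', Succ C a a' ∧ Succ C b b' ∧ Relation.SymmGen (· ≤ ·) a' b' := by
  rcases h with h | h
  · obtain ⟨b', hb'⟩ := exists_succ C b
    obtain ⟨a', ha', hinp, hregs⟩ := exists_succ_of_le C h hb'
    exact ⟨a', b', ha', hb', .of_le (CState.le_iff_regs.2 ⟨hinp, hregs.le⟩)⟩
  · obtain ⟨a', ha'⟩ := exists_succ C a
    obtain ⟨b', hb', hinp, hregs⟩ := exists_succ_of_le C h ha'
    exact ⟨a', b', ha', hb', .of_ge (CState.le_iff_regs.2 ⟨hinp, hregs.le⟩)⟩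

theorem compPath_reach (s₀ : CState m k n) :
    ∀ t, ∀ s ∈ reach C t s₀, ∀ s' ∈ reach C t s₀, CompPath (reach C t s₀) s s'
  | 0, _, rfl, _, rfl => Relation.ReflTransGen.refl
  | t + 1, s, ⟨p, hp, hps⟩, s', ⟨p', hp', hps'⟩ => by
    have hsub : ∀ q ∈ reach C t s₀, {u | Succ C q u} ⊆ reach C (t + 1) s₀ :=
      fun q hq u hu => ⟨q, hq, hu⟩
    suffices ∀ q, CompPath (reach C t s₀) p q → q ∈ reach C t s₀ →
        ∀ u, Succ C q u → CompPath (reach C (t + 1) s₀) s u from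
      this p' (compPath_reach s₀ t p hp p' hp') hp' s' hps'
    intro q hpq
    induction hpq with
    | refl => exact fun _ u hu => (compPath_succ C hps hu).mono (hsub p hp)
    | tail _ hstep ih =>
      intro _ u hu
      obtain ⟨hq₁, hq₂, hcomp⟩ := hstep
      obtain ⟨a', b', ha', hb', hab⟩ := exists_comparable_succ C hcomp
      exact ((ih hq₁ a' ha').trans (Relation.ReflTransGen.single
        ⟨hsub _ hq₁ ha', hsub _ hq₂ hb', hab⟩)).trans ((compPath_succ C hb' hu).mono (hsub _ hq₂))

theorem compPath_cout (t : ℕ) (ι : Fin m → BM) {y y' : Fin n → BM} (hy : y ∈ Cout C t ι)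
    (hy' : y' ∈ Cout C t ι) : CompPath (Cout C t ι) y y' := by
  obtain ⟨s, hs, rfl⟩ := hy
  obtain ⟨s', hs', rfl⟩ := hy'
  exact (compPath_reach C _ t s hs s' hs').map CState.out_mono fun u hu => ⟨u, hu, rfl⟩

end Connectivity

/-! ### The fan-out is not computed in fewer rounds -/

theorem Relation.ReflTransGen.exists_eq_of_le_succ {α : Type*} {R : α → α → Prop} {P : α → Prop}
    (f : α → ℕ) (hf : ∀ a b, R a b → f b ≤ f a + 1) (hP : ∀ a b, R a b → P b) {a b : α}
    (ha : P a) (h : Relation.ReflTransGen R a b) {c : ℕ} (hac : f a ≤ c) (hcb : c ≤ f b) :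
    ∃ x, P x ∧ f x = c := by
  induction h with
  | refl => exact ⟨a, ha, le_antisymm hac hcb⟩
  | @tail b b' _ hstep ih =>
    by_cases hc : c ≤ f b
    · exact ih hc
    · exact ⟨b', hP _ _ hstep, by have := hf _ _ hstep; omega⟩

namespace BM

/-- The weights `0 < M < 1`: resolving one `M` changes the weight by one. -/
def weight : BM → ℕ
  | zero => 0
  | metastable => 1
  | one => 2

theorem weight_le_two (a : BM) : a.weight ≤ 2 := by
  cases a <;> simp [weight]

theorem even_weight {a : BM} (ha : a ≠ metastable) : Even a.weight := by
  cases a <;> simp_all [weight]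

end BM

def wordWeight {r : ℕ} (y : Fin r → BM) : ℕ :=
  ∑ j, (y j).weight

theorem exists_eq_metastable_of_odd {r : ℕ} {y : Fin r → BM} (hy : Odd (wordWeight y)) :
    ∃ j, y j = BM.metastable := by
  by_contra! h
  exact Nat.not_even_iff_odd.2 hy (Finset.even_sum _ fun j _ => BM.even_weight (h j))

theorem eq_of_le_of_subsingleton {r : ℕ} {z y : Fin r → BM} (hzy : z ≤ y)
    (hz : {j | z j = BM.metastable}.Subsingleton) {p : Fin r} (hy : y p = BM.metastable) :
    z = y := by
  have hzp : z p = BM.metastable := BM.eq_metastable_of_le (hzy p) hy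
  funext j
  by_cases hj : z j = BM.metastable
  · rw [hz hj hzp, hzp, hy]
  · exact BM.eq_of_le (hzy j) hj

theorem wordWeight_le_succ_of_le {r : ℕ} {y y' : Fin r → BM} (h : y ≤ y')
    (hy : {j | y j = BM.metastable}.Subsingleton) :
    wordWeight y' ≤ wordWeight y + 1 ∧ wordWeight y ≤ wordWeight y' + 1 := by
  by_cases hM : ∃ p, y p = BM.metastable
  · obtain ⟨p, hp⟩ := hM
    have hrest : ∀ j ∈ Finset.univ.erase p, (y j).weight = (y' j).weight := fun j hj => by
      rw [BM.eq_of_le (h j) fun hj' => Finset.ne_of_mem_erase hj (hy hj' hp)]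
    have hsum := Finset.sum_congr rfl hrest
    have := BM.weight_le_two (y' p)
    rw [wordWeight, wordWeight, ← Finset.add_sum_erase _ _ (Finset.mem_univ p),
      ← Finset.add_sum_erase _ _ (Finset.mem_univ p), hsum, hp,
      show BM.metastable.weight = 1 from rfl]
    omega
  · push Not at hM
    rw [funext fun j => (BM.eq_of_le (h j) (hM j))]
    omega

theorem RegType.maskedRead_ne_metastable {τ : RegType} (hτ : τ ≠ RegType.simple) :
    τ.maskedRead ≠ BM.metastable := by
  cases τ <;> simp_all [RegType.maskedRead]

theorem fanout_of_ne_metastable {r : ℕ} {b : BM} (hb : b ≠ BM.metastable) :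
    fanout r (fun _ => b) = {fun _ => b} := by
  cases b <;> simp_all [fanout]

theorem subsingleton_of_mem_fanout {r : ℕ} {y : Fin r → BM}
    (hy : y ∈ fanout r fun _ => BM.metastable) : {j | y j = BM.metastable}.Subsingleton := by
  obtain ⟨i, hi⟩ : ∃ i : Fin r, fanoutWord r i ≤ y := by
    simpa [fanout, inResM_iff_le] using hy
  have hM : ∀ j, y j = BM.metastable → (j : ℕ) = i := fun j hj => by
    have := BM.eq_metastable_of_le (hi j) hj
    simp only [fanoutWord] at this
    split_ifs at this with h₁ h₂
    exact h₂
  exact fun a ha b hb => Fin.ext ((hM a ha).trans (hM b hb).symm)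

section MetaOut

variable {k r : ℕ} (C : Circuit 1 k r)

noncomputable def metaOut (θ q : ℕ) : Fin r → BM :=
  fun j => minRun C (fun u _ => (C.inType 0).metaRead θ u) q (Fin.natAdd k j)

theorem metaOut_mem_cout (θ q : ℕ) : metaOut C θ q ∈ Cout C q fun _ => BM.metastable := by
  have h := ofRegs_minRun_mem_reach C (σ := fun u _ => (C.inType 0).metaState θ u)
    (ρ := fun u _ => (C.inType 0).metaRead θ u) (t := q) fun u _ i => by
      rw [Fin.fin_one_eq_zero i]
      exact RegType.regRead_metaState _ θ u
  have hσ₀ : (fun _ : Fin 1 => (C.inType 0).metaState θ 0) = fun _ => BM.metastable := by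
    simp [RegType.metaState]
  exact ⟨_, hσ₀ ▸ h, rfl⟩

theorem metaOut_eq_of_simple (hτ : C.inType 0 = RegType.simple) (θ q : ℕ) :
    metaOut C θ q = metaOut C 0 q := by
  unfold metaOut
  rw [hτ]
  simp only [RegType.metaRead, RegType.maskedRead, RegType.flipped, ite_self]

/-- A masking input register that never yields `M` behaves like a stable input. -/
theorem metaOut_mem_cout_maskedRead (hτ : C.inType 0 ≠ RegType.simple) (q : ℕ) :
    metaOut C q q ∈ Cout C q fun _ => (C.inType 0).maskedRead := by
  have hb : regRead (C.inType 0) (C.inType 0).maskedRead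
      ((C.inType 0).maskedRead, (C.inType 0).maskedRead) := by
    cases h : C.inType 0 <;> simp_all [regRead, RegType.maskedRead]
  have h := ofRegs_minRun_mem_reach C (σ := fun _ _ => (C.inType 0).maskedRead)
    (ρ := fun _ _ => (C.inType 0).maskedRead) (t := q) fun u _ i => by
      rw [Fin.fin_one_eq_zero i]
      exact hb
  refine ⟨_, h, funext fun j => ?_⟩
  simp only [metaOut, CState.ofRegs]
  exact congrFun (minRun_congr C fun u hu => funext fun _ => by simp [RegType.metaRead, hu]) _

variable {C}

theorem eq_metaOut_of_mem_cout {q : ℕ} (hC : Implements C q (fanout r)) (hq : 0 < q)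
    {y : Fin r → BM}
    (hy : y ∈ Cout C q fun _ => BM.metastable) {p : Fin r} (hyp : y p = BM.metastable) :
    ∃ θ < q, y = metaOut C θ q := by
  obtain ⟨s, hs, rfl⟩ := hy
  obtain ⟨σ, ρ, hσ₀, hhist, -, hle⟩ := exists_minRun_le C _ q s hs
  obtain ⟨θ, hθ, -, hρ⟩ := (C.inType 0).exists_metaRead (σ := fun u => σ u 0)
    (ρ := fun u => ρ u 0) (by simp [hσ₀]) q fun u hu => hhist u hu 0
  have hρθ : minRun C ρ q = minRun C (fun u _ => (C.inType 0).metaRead θ u) q :=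
    minRun_congr C fun u hu => funext fun i => by rw [Fin.fin_one_eq_zero i]; exact hρ u hu
  have hout : metaOut C θ q ≤ s.out := fun j => by
    simpa [metaOut, hρθ, CState.regs] using hle (Fin.natAdd k j)
  have heq := eq_of_le_of_subsingleton hout
    (subsingleton_of_mem_fanout (hC _ (metaOut_mem_cout C θ q))) hyp
  rcases hθ.lt_or_eq with hθ | rfl
  · exact ⟨θ, hθ, heq.symm⟩
  by_cases hτ : C.inType 0 = RegType.simple
  · exact ⟨0, hq, by rw [← heq, metaOut_eq_of_simple C hτ]⟩
  have hstable := hC _ (metaOut_mem_cout_maskedRead C hτ θ)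
  rw [fanout_of_ne_metastable (RegType.maskedRead_ne_metastable hτ), heq] at hstable
  exact absurd (hyp ▸ congrFun hstable p) (RegType.maskedRead_ne_metastable hτ).symm

end MetaOut

section LowerBound

variable {k r t : ℕ} {C : Circuit 1 k r} (hC : Implements C (t + 1) (fanout r))
include hC

theorem const_mem_cout_of_implements {b : BM} (hb : b ≠ BM.metastable) :
    (fun _ => b) ∈ Cout C (t + 1) fun _ => BM.metastable := by
  obtain ⟨s, hs⟩ := reach_nonempty C (t + 1) (initState C fun _ => b)
  have hmem : s.out ∈ Cout C (t + 1) fun _ => b := ⟨s, hs, rfl⟩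
  have hout : s.out = fun _ => b := by simpa [fanout_of_ne_metastable hb] using hC _ hmem
  exact cout_antitone C t (fun _ => BM.metastable_le b) (hout ▸ hmem)

/-- Along a comparability path of outputs from `0^r` to `1^r` the weight moves by at most one. -/
theorem exists_wordWeight_eq_of_implements {c : ℕ} (hc : c ≤ 2 * r) :
    ∃ y ∈ Cout C (t + 1) (fun _ => BM.metastable), wordWeight y = c := by
  have hsub : ∀ y ∈ Cout C (t + 1) fun _ => BM.metastable, {j | y j = BM.metastable}.Subsingleton :=
    fun y hy => subsingleton_of_mem_fanout (hC _ hy)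
  have h₀ := const_mem_cout_of_implements hC (b := BM.zero) (by simp)
  have h₁ := const_mem_cout_of_implements hC (b := BM.one) (by simp)
  refine (compPath_cout C (t + 1) _ h₀ h₁).exists_eq_of_le_succ wordWeight
    (fun a b h => h.2.2.elim (fun h' => (wordWeight_le_succ_of_le h' (hsub a h.1)).1)
      fun h' => (wordWeight_le_succ_of_le h' (hsub b h.2.1)).2)
    (fun _ _ h => h.2.1) h₀ (by simp [wordWeight, BM.weight]) ?_
  simpa [wordWeight, BM.weight, mul_comm] using hc

theorem le_of_implements_fanout : r ≤ t + 1 := by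
  have hodd : ∀ c : Fin r, ∃ y ∈ Cout C (t + 1) (fun _ => BM.metastable),
      wordWeight y = 2 * c + 1 := fun c => exists_wordWeight_eq_of_implements hC (by omega)
  choose y hyY hyw using hodd
  have hθ : ∀ c, ∃ θ < t + 1, y c = metaOut C θ (t + 1) := fun c =>
    let ⟨_, hp⟩ := exists_eq_metastable_of_odd ⟨c, hyw c⟩
    eq_metaOut_of_mem_cout hC t.succ_pos (hyY c) hp
  choose θ hθq hθy using hθ
  have hinj : Function.Injective fun c => (⟨θ c, hθq c⟩ : Fin (t + 1)) := fun c c' h => by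
    have hyy : y c = y c' := by rw [hθy c, hθy c', show θ c = θ c' from Fin.mk.inj_iff.1 h]
    have := congrArg wordWeight hyy
    rw [hyw, hyw] at this
    exact Fin.ext (by omega)
  simpa using Fintype.card_le_of_injective _ hinj

end LowerBound

theorem not_implements_fanout {k r q : ℕ} (hq : 0 < q) (hqr : q < r) (C : Circuit 1 k r) :
    ¬Implements C q (fanout r) := by
  obtain ⟨t, rfl⟩ : ∃ t, q = t + 1 := ⟨q - 1, by omega⟩
  exact fun hC => absurd (le_of_implements_fanout hC) (by omega)

/-- with masking registers each additional round strictly increases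
computational power: `Fun_M^r ⊊ Fun_M^{r+1}` for every `r ∈ ℕ`; in particular, for
`r ≥ 2` the fan-out `f` satisfies `f ∈ Fun_M^r` and `f ∉ Fun_M^{r-1}`. -/
theorem funM_hierarchy_strict :
    (∀ r : ℕ, 0 < r → FunMAll r ⊂ FunMAll (r + 1)) ∧
    (∀ r : ℕ, 2 ≤ r → fanout r ∈ FunM r 1 r ∧ fanout r ∉ FunM (r - 1) 1 r) := by
  refine ⟨fun r hr => ssubset_of_subset_not_subset (funMAll_subset_succ hr) fun h => ?_,
    fun r hr => ?_⟩
  · obtain ⟨k, C, hC⟩ := fanout_mem_funM r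
    obtain ⟨k', C', hC'⟩ := h (a := ⟨1, r + 1, fanout (r + 1)⟩) ⟨k, C, hC⟩
    exact not_implements_fanout hr r.lt_succ_self C' hC'
  · obtain ⟨s, rfl⟩ : ∃ s, r = s + 1 := ⟨r - 1, by omega⟩
    exact ⟨fanout_mem_funM s, fun ⟨k, C, hC⟩ => not_implements_fanout (by omega) (by omega) C hC⟩
end

section
/- For every Boolean function f : B^m → B^n, its metastable closure [f]_M is natural (bit-wise, closed, and specific), and hence [f]_M ∈ Fun_S, i.e., [f]_M is implementable by a circuit with only simple registers. -/
set_option linter.unusedVariables false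

attribute [local instance] Classical.propDecidable

/-! Stabilizing an input only shrinks its (never empty) set of Boolean resolutions, so each
component of `[f]_M` can only pass from `BM` to `{0}` or `{1}`: this is specificity. For
implementability, one round of a circuit with a single gate per output bit suffices: the gate
computes the Kleene extension of that bit of `f` on the values read from simple input
registers, which are the inputs themselves, and every partial resolution of that value lies in
the corresponding component of `[f]_M`. -/

lemma boolRes_nonempty {k : ℕ} (x : Fin k → BM) : (boolRes x).Nonempty :=
  ⟨fun i => x i == BM.one, fun i => by rcases hx : x i <;> simp only [hx] <;> decide⟩

lemma boolRes_subset_of_inRes {k : ℕ} {x y : Fin k → BM} (h : inRes x y) :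
    boolRes y ⊆ boolRes x := by
  intro z hz i
  rcases hz i with hy | hy
  · exact (h.1 i).imp (fun hxy => hxy.trans hy) id
  · exact absurd hy (h.2 i)

lemma mclosureC_closed {m n : ℕ} (f : (Fin m → Bool) → Fin n → Bool) (x : Fin m → BM)
    (i : Fin n) :
    mclosureC f x i = {BM.zero} ∨ mclosureC f x i = {BM.one} ∨ mclosureC f x i = Set.univ := by
  unfold mclosureC
  split_ifs <;> simp

lemma mclosureC_mono {m n : ℕ} (f : (Fin m → Bool) → Fin n → Bool) {x y : Fin m → BM}
    (h : boolRes y ⊆ boolRes x) (i : Fin n) : mclosureC f y i ⊆ mclosureC f x i := by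
  unfold mclosureC
  by_cases h0 : ∀ z ∈ boolRes x, f z i = false
  · rw [if_pos h0, if_pos fun z hz => h0 z (h hz)]
  by_cases h1 : ∀ z ∈ boolRes x, f z i = true
  · -- `y` has a resolution, on which `f` is `true`, so `[f]_M y` cannot be `{0}`
    have hy0 : ¬ ∀ z ∈ boolRes y, f z i = false := fun hy0 => by
      obtain ⟨z, hz⟩ := boolRes_nonempty y
      simpa [h1 z (h hz)] using hy0 z hz
    rw [if_neg h0, if_pos h1, if_neg hy0, if_pos fun z hz => h1 z (h hz)]
  · rw [if_neg h0, if_neg h1]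
    exact Set.subset_univ _

theorem mclosure_isNatural {m n : ℕ} (f : (Fin m → Bool) → Fin n → Bool) :
    IsNatural (mclosure f) :=
  ⟨⟨fun i x => mclosureC f x i, fun i x => mclosureC_closed f x i, fun _ => rfl⟩,
    fun _ _ hxy _ hw i => mclosureC_mono f (boolRes_subset_of_inRes hxy) i (hw i)⟩

lemma mem_mclosureC_of_kleene {m n : ℕ} (f : (Fin m → Bool) → Fin n → Bool)
    (x : Fin m → BM) (i : Fin n) {b : BM}
    (hb : kleene (f · i) x = b ∨ kleene (f · i) x = BM.metastable) :
    b ∈ mclosureC f x i := by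
  unfold kleene at hb
  unfold mclosureC
  split_ifs at hb ⊢ <;> simp_all

lemma mem_mclosure_of_inResM_kleene {m n : ℕ} (f : (Fin m → Bool) → Fin n → Bool)
    {x : Fin m → BM} {y : Fin n → BM} (hy : inResM (fun i => kleene (f · i) x) y) :
    y ∈ mclosure f x :=
  fun i => mem_mclosureC_of_kleene f x i (hy i)

lemma regRead_simple_iff {b o b' : BM} :
    regRead RegType.simple b (o, b') ↔ o = b ∧ b' = b := by
  cases b <;> simp [regRead]

lemma ReadRel.inp_eq {m k n : ℕ} {C : Circuit m k n} {s : CState m k n}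
    {o : Fin (m + k) → BM} {ι' : Fin m → BM} (hC : ∀ i, C.inType i = RegType.simple)
    (h : ReadRel C s o ι') (i : Fin m) : o (Fin.castAdd k i) = s.inp i := by
  have hi := h.1 i
  rw [hC i, regRead_simple_iff] at hi
  exact hi.1

lemma exists_readRel_of_mem_Cout_one {m k n : ℕ} {C : Circuit m k n} {ι : Fin m → BM}
    {y : Fin n → BM} (hy : y ∈ Cout C 1 ι) :
    ∃ o ι', ReadRel C (initState C ι) o ι' ∧
      inResM (fun j => evalLogic C o (Fin.natAdd k j)) y := by
  obtain ⟨s, ⟨u, rfl, o, ι', hread, -, hwrite⟩, rfl⟩ := hy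
  exact ⟨o, ι', hread, fun j => by simpa using hwrite (Fin.natAdd k j)⟩

noncomputable def mclosureCircuit {m n : ℕ} (f : (Fin m → Bool) → Fin n → Bool) :
    Circuit m 0 n where
  inType _ := RegType.simple
  locType _ := RegType.simple
  outType _ := RegType.simple
  logic j :=
    Comb.gate m (f · (Fin.cast (Nat.zero_add n) j)) (fun t => Comb.input (Fin.castAdd 0 t))
  init _ := BM.zero

lemma onlySimple_mclosureCircuit {m n : ℕ} (f : (Fin m → Bool) → Fin n → Bool) :
    OnlySimple (mclosureCircuit f) :=
  ⟨fun _ => rfl, fun _ => rfl, fun _ => rfl⟩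

lemma implements_mclosureCircuit {m n : ℕ} (f : (Fin m → Bool) → Fin n → Bool) :
    Implements (mclosureCircuit f) 1 (mclosure f) := by
  intro ι y hy
  obtain ⟨o, ι', hread, hy⟩ := exists_readRel_of_mem_Cout_one hy
  have hinp : (fun t => o (Fin.castAdd 0 t)) = ι :=
    funext (hread.inp_eq (C := mclosureCircuit f) fun _ => rfl)
  have heval (j : Fin n) :
      evalLogic (mclosureCircuit f) o (Fin.natAdd 0 j) = kleene (f · j) ι := by
    have hj : Fin.cast (Nat.zero_add n) (Fin.natAdd 0 j) = j := Fin.ext (by simp)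
    simp only [evalLogic, mclosureCircuit, Comb.eval, hj, hinp]
  refine mem_mclosure_of_inResM_kleene f fun j => ?_
  simpa only [heval] using hy j

/-- for every Boolean function `f : B^m → B^n`, its metastable closure
`[f]_M` is natural, and hence `[f]_M ∈ Fun_S`. -/
theorem mclosure_natural_and_implementable {m n : ℕ}
    (f : (Fin m → Bool) → Fin n → Bool) :
    IsNatural (mclosure f) ∧ mclosure f ∈ FunS 1 m n :=
  ⟨mclosure_isNatural f,
    0, mclosureCircuit f, onlySimple_mclosureCircuit f, implements_mclosureCircuit f⟩
end

section
/- The metastable closure is the minimum natural extension: let f : B^m → B^n be a Boolean function and let g : BM^m → Pow(BM^n) be any natural function with f(x) ∈ g(x) for all x ∈ B^m. Then [f]_M(x) ⊆ g(x) for all x ∈ BM^m. -/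
set_option linter.unusedVariables false

attribute [local instance] Classical.propDecidable

/-! Every complete resolution `z` of `x` satisfies `f z ∈ g z ⊆ g x` by extension and
specificity, so each closed component of `g x` contains all values `f z i`. The closure
component `[f]_M(x)_i` is the least closed set with this property: it is `{b}` exactly
when all these values equal `b`. -/

@[simp]
lemma BM.ofBool_eq_zero_iff_s16 {b : Bool} : BM.ofBool b = BM.zero ↔ b = false := by
  cases b <;> simp [BM.ofBool]

@[simp]
lemma BM.ofBool_eq_one_iff {b : Bool} : BM.ofBool b = BM.one ↔ b = true := by
  cases b <;> simp [BM.ofBool]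

lemma BM.ofBool_ne_metastable (b : Bool) : BM.ofBool b ≠ BM.metastable := by
  cases b <;> simp [BM.ofBool]

lemma inRes_ofBool_of_mem_boolRes {k : ℕ} {x : Fin k → BM} {z : Fin k → Bool}
    (hz : z ∈ boolRes x) : inRes x (fun j => BM.ofBool (z j)) :=
  ⟨hz, fun j => BM.ofBool_ne_metastable (z j)⟩

lemma mclosureC_subset {m n : ℕ} {f : (Fin m → Bool) → Fin n → Bool} {x : Fin m → BM}
    {i : Fin n} {S : Set BM} (hS : S = {BM.zero} ∨ S = {BM.one} ∨ S = Set.univ)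
    (hres : ∀ z ∈ boolRes x, BM.ofBool (f z i) ∈ S) : mclosureC f x i ⊆ S := by
  rcases hS with rfl | rfl | rfl
  · have hfalse : ∀ z ∈ boolRes x, f z i = false := by simpa using hres
    rw [mclosureC, if_pos hfalse]
  · have htrue : ∀ z ∈ boolRes x, f z i = true := by simpa using hres
    obtain ⟨z₀, hz₀⟩ := boolRes_nonempty x
    have hnot_false : ¬ ∀ z ∈ boolRes x, f z i = false :=
      fun hfalse => by simpa [htrue z₀ hz₀] using hfalse z₀ hz₀
    rw [mclosureC, if_neg hnot_false, if_pos htrue]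
  · exact Set.subset_univ _

/-- the metastable closure is the minimum natural extension: if `g` is
natural and `f(x) ∈ g(x)` for all stable `x ∈ B^m`, then `[f]_M(x) ⊆ g(x)` for all
`x ∈ BM^m`. -/
theorem mclosure_minimal {m n : ℕ} (f : (Fin m → Bool) → Fin n → Bool)
    (g : (Fin m → BM) → Set (Fin n → BM)) (hg : IsNatural g)
    (hext : ∀ z : Fin m → Bool,
      (fun i => BM.ofBool (f z i)) ∈ g (fun i => BM.ofBool (z i))) :
    ∀ x, mclosure f x ⊆ g x := by
  obtain ⟨⟨gc, hclosed, hprod⟩, hspec⟩ := hg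
  intro x y hy
  rw [hprod]
  intro i
  refine mclosureC_subset (hclosed i x) (fun z hz => ?_) (hy i)
  have hz_mem : (fun j => BM.ofBool (f z j)) ∈ g x :=
    hspec x _ (inRes_ofBool_of_mem_boolRes hz) (hext z)
  rw [hprod] at hz_mem
  exact hz_mem i
end

section
/- Metastability-containing maximum of Gray-coded numbers: define max_BRGC : B^k × B^k → B^k by max_BRGC(x, y) := rg(max{rg^{-1}(x), rg^{-1}(y)}). If x, y ∈ BM^k each have precision-1 with respect to rg, then the output specification [max_BRGC]_M(x, y) has precision-1: for all stable u, v ∈ B^k with u ∈ ∏_i [max_BRGC]_M(x,y)_i and v ∈ ∏_i [max_BRGC]_M(x,y)_i, |rg^{-1}(u) − rg^{-1}(v)| ≤ 1. Moreover, at most one component of [max_BRGC]_M(x, y) equals BM. -/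
set_option linter.unusedVariables false

attribute [local instance] Classical.propDecidable

/-- The `k`-bit binary reflected Gray code `rg(x)`: bit `i` of `x XOR ⌊x/2⌋`. -/
def grayEnc (k : ℕ) (x : ℕ) : Fin k → Bool := fun i => (x ^^^ x / 2).testBit i

/-- Gray decoding `rg⁻¹`: binary bit `i` is the XOR of the Gray bits `j ≥ i`. -/
noncomputable def grayDec (k : ℕ) (g : Fin k → Bool) : ℕ :=
  ∑ i : Fin k,
    if (Finset.univ.filter fun j : Fin k => i ≤ j ∧ g j).card % 2 = 1
    then 2 ^ (i : ℕ) else 0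

/-- `max_BRGC : B^k × B^k → B^k` (inputs concatenated) is
`rg(max{rg⁻¹(x), rg⁻¹(y)})`. -/
noncomputable def maxBRGC (k : ℕ) (z : Fin (k + k) → Bool) : Fin k → Bool :=
  grayEnc k (max (grayDec k (z ∘ Fin.castAdd k)) (grayDec k (z ∘ Fin.natAdd k)))

/-- `x ∈ BM^k` has precision-1 w.r.t. the Gray code: any two complete resolutions
decode to values at distance at most 1. -/
noncomputable def precision1 {k : ℕ} (x : Fin k → BM) : Prop :=
  ∀ y z : Fin k → Bool, y ∈ boolRes x → z ∈ boolRes x →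
    (grayDec k y : ℤ) - grayDec k z ≤ 1

/-! Let `c` be the least value of `max (rg⁻¹ x') (rg⁻¹ y')` over the complete resolutions
`(x', y')` of `(x, y)`. Since both inputs have precision 1, every resolution yields `c` or
`c + 1`, so every output of `max_BRGC` on them is `rg c` or `rg (c + 1)`. These two code words
differ only in the lowest zero bit of `c`; hence at most that output bit is metastable, and a
stable word allowed by the closure is one of the outputs that actually occur. -/

lemma grayEnc_apply (k n : ℕ) (i : Fin k) :
    grayEnc k n i = (n.testBit i ^^ n.testBit (i + 1)) := by
  simp [grayEnc, Nat.testBit_xor, Nat.testBit_div_two]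

lemma Nat.testBit_succ_ne_iff (c j : ℕ) :
    (c + 1).testBit j ≠ c.testBit j ↔ ∀ l < j, c.testBit l = true := by
  induction j generalizing c with
  | zero => simp [Nat.testBit_zero]; omega
  | succ j ih =>
    rw [Nat.testBit_add_one, Nat.testBit_add_one, Nat.forall_lt_succ_left]
    rcases Nat.even_or_odd' c with ⟨n, rfl | rfl⟩
    · simp [Nat.testBit_zero, show (2 * n + 1) / 2 = n by omega]
    · simp only [show (2 * n + 1 + 1) / 2 = n + 1 by omega, show (2 * n + 1) / 2 = n by omega,
        ih, Nat.testBit_add_one, Nat.testBit_zero]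
      simp

lemma grayEnc_succ_ne_iff (k c : ℕ) (i : Fin k) :
    grayEnc k (c + 1) i ≠ grayEnc k c i ↔
      (∀ l < (i : ℕ), c.testBit l = true) ∧ c.testBit i = false := by
  have hxor : ∀ a b a' b' : Bool, (a ^^ b) ≠ (a' ^^ b') ↔ (a ≠ a' ↔ ¬b ≠ b') := by decide
  rw [grayEnc_apply, grayEnc_apply, hxor, Nat.testBit_succ_ne_iff, Nat.testBit_succ_ne_iff,
    Nat.forall_lt_succ_right]
  generalize (∀ l < (i : ℕ), c.testBit l = true) = p
  cases c.testBit i <;> simp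

lemma subsingleton_grayEnc_ne_grayEnc_succ (k c : ℕ) :
    {i | grayEnc k c i ≠ grayEnc k (c + 1) i}.Subsingleton := by
  intro i hi j hj
  rw [Set.mem_ofPred_eq, ne_comm, grayEnc_succ_ne_iff] at hi hj
  by_contra hij
  rcases Ne.lt_or_gt hij with h | h
  · simp [hj.1 i h] at hi
  · simp [hi.1 j h] at hj

lemma Nat.sum_fin_ite_two_pow_lt {k : ℕ} (p : Fin k → Prop) [DecidablePred p] :
    ∑ i : Fin k, (if p i then 2 ^ (i : ℕ) else 0) < 2 ^ k := by
  induction k with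
  | zero => simp
  | succ k ih =>
    rw [Fin.sum_univ_castSucc, pow_succ]
    have hlast : (if p (Fin.last k) then 2 ^ k else 0) ≤ 2 ^ k := by split <;> simp
    simpa using Nat.add_lt_add_of_lt_of_le (ih fun i => p i.castSucc) hlast |>.trans_le (by omega)

lemma Nat.sum_fin_ite_testBit {k c : ℕ} (hc : c < 2 ^ k) :
    ∑ i : Fin k, (if c.testBit i then 2 ^ (i : ℕ) else 0) = c := by
  induction k generalizing c with
  | zero => simp_all
  | succ k ih =>
    rw [pow_succ] at hc
    rw [Fin.sum_univ_succ]
    have hterm : ∀ i : Fin k, (if c.testBit (i.succ : ℕ) then 2 ^ (i.succ : ℕ) else 0) =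
        2 * (if (c / 2).testBit i then 2 ^ (i : ℕ) else 0) := by
      intro i
      rw [Fin.val_succ, Nat.testBit_add_one, pow_succ]
      split <;> ring
    rw [Finset.sum_congr rfl fun i _ => hterm i, ← Finset.mul_sum, ih (by omega)]
    simp only [Fin.val_zero, pow_zero, Nat.testBit_zero, decide_eq_true_eq]
    split <;> omega

lemma Nat.card_filter_testBit_ne_mod_two_eq_one_iff (c : ℕ) {i k : ℕ} (hik : i ≤ k) :
    ((Finset.Ico i k).filter fun j => c.testBit j ≠ c.testBit (j + 1)).card % 2 = 1 ↔
      c.testBit i ≠ c.testBit k := by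
  induction k, hik using Nat.le_induction with
  | base => simp
  | succ k hik ih =>
    rw [Nat.Ico_succ_right_eq_insert_Ico hik, Finset.filter_insert]
    split_ifs with h
    · rw [Finset.card_insert_of_notMem (by simp), Nat.succ_mod_two_eq_one_iff,
        ← Nat.mod_two_ne_one, ne_eq, ih]
      revert h; cases c.testBit i <;> cases c.testBit k <;> cases c.testBit (k + 1) <;> simp
    · rw [ih]
      revert h; cases c.testBit i <;> cases c.testBit k <;> cases c.testBit (k + 1) <;> simp

lemma Fin.card_filter_le_and_eq {k : ℕ} (P : ℕ → Prop) [DecidablePred P] (i : Fin k) :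
    (Finset.univ.filter fun j : Fin k => i ≤ j ∧ P j).card =
      ((Finset.Ico (i : ℕ) k).filter P).card := by
  rw [← Finset.card_map Fin.valEmbedding]
  congr 1
  ext j
  simp only [Finset.mem_map, Finset.mem_filter, Finset.mem_univ, true_and, Fin.valEmbedding_apply,
    Finset.mem_Ico]
  constructor
  · rintro ⟨j, ⟨hij, hj⟩, rfl⟩
    exact ⟨⟨hij, j.isLt⟩, hj⟩
  · rintro ⟨⟨hij, hjk⟩, hj⟩
    exact ⟨⟨j, hjk⟩, ⟨hij, hj⟩, rfl⟩

lemma grayDec_lt (k : ℕ) (g : Fin k → Bool) : grayDec k g < 2 ^ k :=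
  Nat.sum_fin_ite_two_pow_lt _

lemma grayDec_grayEnc {k c : ℕ} (hc : c < 2 ^ k) : grayDec k (grayEnc k c) = c := by
  -- bit `i` of `grayDec` is a parity of the bits `c_j ⊕ c_(j+1)`, `i ≤ j < k`, which telescopes
  -- to `c_i ⊕ c_k = c_i`
  have hparity : ∀ i : Fin k,
      (Finset.univ.filter fun j : Fin k => i ≤ j ∧ grayEnc k c j).card % 2 = 1 ↔
        c.testBit i = true := by
    intro i
    simp only [grayEnc_apply, Bool.xor, bne_iff_ne]
    rw [Fin.card_filter_le_and_eq (fun j => c.testBit j ≠ c.testBit (j + 1)),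
      Nat.card_filter_testBit_ne_mod_two_eq_one_iff c i.isLt.le, Nat.testBit_lt_two_pow hc]
    simp
  unfold grayDec
  rw [Finset.sum_congr rfl fun i _ => if_congr (hparity i) rfl rfl]
  exact Nat.sum_fin_ite_testBit hc

lemma Function.eq_or_eq_of_forall_eq_or_eq {ι β : Type*} {a b u : ι → β}
    (hab : {i | a i ≠ b i}.Subsingleton) (hu : ∀ i, u i = a i ∨ u i = b i) : u = a ∨ u = b := by
  by_contra! h
  obtain ⟨i, hi⟩ := Function.ne_iff.mp h.1
  obtain ⟨j, hj⟩ := Function.ne_iff.mp h.2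
  have hib : u i = b i := (hu i).resolve_left hi
  have hja : u j = a j := (hu j).resolve_right hj
  obtain rfl : i = j := hab (show a i ≠ b i from hib ▸ Ne.symm hi) (show a j ≠ b j from hja ▸ hj)
  exact hi hja

lemma Set.exists_forall_eq_or_eq_succ {α : Type*} {s : Set α} (hs : s.Finite) (hne : s.Nonempty)
    {N : α → ℕ} (hN : ∀ z ∈ s, ∀ z' ∈ s, N z ≤ N z' + 1) :
    ∃ z₀ ∈ s, ∀ z ∈ s, N z = N z₀ ∨ N z = N z₀ + 1 := by
  obtain ⟨z₀, hz₀, hmin⟩ := s.exists_min_image N hs hne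
  exact ⟨z₀, hz₀, fun z hz => by have := hmin z hz; have := hN z hz z₀ hz₀; omega⟩

lemma BM.ofBool_injective : Function.Injective BM.ofBool := by
  decide

lemma boolRes_append_left {k l : ℕ} {x : Fin k → BM} {y : Fin l → BM} {z : Fin (k + l) → Bool}
    (hz : z ∈ boolRes (Fin.append x y)) : z ∘ Fin.castAdd l ∈ boolRes x := fun i => by
  simpa using hz (Fin.castAdd l i)

lemma boolRes_append_right {k l : ℕ} {x : Fin k → BM} {y : Fin l → BM} {z : Fin (k + l) → Bool}
    (hz : z ∈ boolRes (Fin.append x y)) : z ∘ Fin.natAdd k ∈ boolRes y := fun i => by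
  simpa using hz (Fin.natAdd k i)

section mclosureC

variable {m n : ℕ} {f : (Fin m → Bool) → Fin n → Bool} {X : Fin m → BM} {i : Fin n}

lemma exists_mem_boolRes_of_ofBool_mem_mclosureC {b : Bool}
    (hb : BM.ofBool b ∈ mclosureC f X i) : ∃ z ∈ boolRes X, f z i = b := by
  obtain ⟨z₀, hz₀⟩ := boolRes_nonempty X
  unfold mclosureC at hb
  split_ifs at hb with hfalse htrue
  · exact ⟨z₀, hz₀, (hfalse z₀ hz₀).trans (@BM.ofBool_injective b false hb).symm⟩
  · exact ⟨z₀, hz₀, (htrue z₀ hz₀).trans (@BM.ofBool_injective b true hb).symm⟩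
  · push Not at hfalse htrue
    cases b
    · simpa using htrue
    · simpa using hfalse

lemma exists_ne_of_mclosureC_eq_univ (h : mclosureC f X i = Set.univ) :
    ∃ z ∈ boolRes X, ∃ z' ∈ boolRes X, f z i ≠ f z' i := by
  unfold mclosureC at h
  split_ifs at h with hfalse htrue
  · exact absurd (h ▸ Set.mem_univ BM.one) (by simp)
  · exact absurd (h ▸ Set.mem_univ BM.zero) (by simp)
  · push Not at hfalse htrue
    obtain ⟨z, hz, hzi⟩ := hfalse
    obtain ⟨z', hz', hz'i⟩ := htrue
    exact ⟨z, hz, z', hz', by simp_all⟩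

end mclosureC

section grayClosure

variable {m k : ℕ} {X : Fin m → BM} {N : (Fin m → Bool) → ℕ}

lemma exists_eq_grayEnc_of_forall_ofBool_mem_mclosureC
    (hN : ∀ z ∈ boolRes X, ∀ z' ∈ boolRes X, N z ≤ N z' + 1) {u : Fin k → Bool}
    (hu : ∀ i, BM.ofBool (u i) ∈ mclosureC (fun z => grayEnc k (N z)) X i) :
    ∃ z ∈ boolRes X, u = grayEnc k (N z) := by
  obtain ⟨z₀, hz₀, hrange⟩ :=
    Set.exists_forall_eq_or_eq_succ (boolRes X).toFinite (boolRes_nonempty X) hN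
  have hwit := fun i => exists_mem_boolRes_of_ofBool_mem_mclosureC (hu i)
  by_cases hall : ∀ z ∈ boolRes X, N z = N z₀
  · refine ⟨z₀, hz₀, funext fun i => ?_⟩
    obtain ⟨z, hz, hzi⟩ := hwit i
    rw [← hzi, hall z hz]
  · push Not at hall
    obtain ⟨z₁, hz₁, hNz₁⟩ := hall
    have hz₁succ : N z₁ = N z₀ + 1 := (hrange z₁ hz₁).resolve_left hNz₁
    have hbits : ∀ i, u i = grayEnc k (N z₀) i ∨ u i = grayEnc k (N z₀ + 1) i := by
      intro i
      obtain ⟨z, hz, hzi⟩ := hwit i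
      rcases hrange z hz with h | h <;> rw [← hzi, h] <;> simp
    rcases Function.eq_or_eq_of_forall_eq_or_eq
      (subsingleton_grayEnc_ne_grayEnc_succ k (N z₀)) hbits with h | h
    · exact ⟨z₀, hz₀, h⟩
    · exact ⟨z₁, hz₁, hz₁succ ▸ h⟩

lemma subsingleton_mclosureC_grayEnc_eq_univ
    (hN : ∀ z ∈ boolRes X, ∀ z' ∈ boolRes X, N z ≤ N z' + 1) :
    {i : Fin k | mclosureC (fun z => grayEnc k (N z)) X i = Set.univ}.Subsingleton := by
  obtain ⟨z₀, hz₀, hrange⟩ :=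
    Set.exists_forall_eq_or_eq_succ (boolRes X).toFinite (boolRes_nonempty X) hN
  refine (subsingleton_grayEnc_ne_grayEnc_succ k (N z₀)).anti fun i hi => ?_
  obtain ⟨z, hz, z', hz', hne⟩ := exists_ne_of_mclosureC_eq_univ hi
  rcases hrange z hz with h | h <;> rcases hrange z' hz' with h' | h' <;> rw [h, h'] at hne
  exacts [absurd rfl hne, hne, hne.symm, absurd rfl hne]

end grayClosure

/-- if `x, y ∈ BM^k` have precision-1 w.r.t. the Gray code, then the
metastable closure `[max_BRGC]_M(x, y)` has precision-1 (all stable words in the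
output specification decode to values at distance at most 1), and at most one of its
components equals `BM`. -/
theorem maxBRGC_closure_precision1 {k : ℕ} (x y : Fin k → BM)
    (hx : precision1 x) (hy : precision1 y) :
    (∀ u v : Fin k → Bool,
        (∀ i, BM.ofBool (u i) ∈ mclosureC (maxBRGC k) (Fin.append x y) i) →
        (∀ i, BM.ofBool (v i) ∈ mclosureC (maxBRGC k) (Fin.append x y) i) →
        |(grayDec k u : ℤ) - (grayDec k v : ℤ)| ≤ 1) ∧
    (∀ i j : Fin k,
        mclosureC (maxBRGC k) (Fin.append x y) i = Set.univ →
        mclosureC (maxBRGC k) (Fin.append x y) j = Set.univ → i = j) := by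
  set N : (Fin (k + k) → Bool) → ℕ :=
    fun z => max (grayDec k (z ∘ Fin.castAdd k)) (grayDec k (z ∘ Fin.natAdd k))
  have hN : ∀ z ∈ boolRes (Fin.append x y), ∀ z' ∈ boolRes (Fin.append x y), N z ≤ N z' + 1 := by
    intro z hz z' hz'
    have := hx _ _ (boolRes_append_left hz) (boolRes_append_left hz')
    have := hy _ _ (boolRes_append_right hz) (boolRes_append_right hz')
    simp only [N]
    omega
  have hdec : ∀ u : Fin k → Bool,
      (∀ i, BM.ofBool (u i) ∈ mclosureC (maxBRGC k) (Fin.append x y) i) →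
      ∃ z ∈ boolRes (Fin.append x y), grayDec k u = N z := by
    intro u hu
    obtain ⟨z, hz, rfl⟩ := exists_eq_grayEnc_of_forall_ofBool_mem_mclosureC hN hu
    exact ⟨z, hz, grayDec_grayEnc (max_lt (grayDec_lt k _) (grayDec_lt k _))⟩
  refine ⟨fun u v hu hv => ?_, fun i j hi hj => subsingleton_mclosureC_grayEnc_eq_univ hN hi hj⟩
  obtain ⟨z, hz, hu⟩ := hdec u hu
  obtain ⟨z', hz', hv⟩ := hdec v hv
  have := hN z hz z' hz'
  have := hN z' hz' z hz
  rw [hu, hv, abs_le]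
  constructor <;> omega
end
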